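/- For all integers r, s and all natural numbers m, the following two identities hold: Σ_{i=0}^{2m} (−1)^i·U_{r+2i}·V_{s+2i} = d_m·U_{4m+r+s} − q^r·U_{s−r}, and Σ_{i=0}^{2m+1} (−1)^i·U_{r+2i}·V_{s+2i} = −p·c_m·V_{4m+r+s+2}. -/

import Mathlib

/-!
For `q` a unit, the product formula `U a * V b = U (a + b) - q ^ a * U (b - a)` (with `q ^ a` a
`zpow`) holds on all of `ℤ`. When `q ^ 2 = 1` it turns the sum into `∑ (-1)^i U (r + s + 4 i)`
minus `(∑ (-1)^i) q ^ r U (s - r)`, and gives `V 2 * U w = U (w + 2) + U (w - 2)`, so `V 2` times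
the alternating sum telescopes to `U (r + s - 2) ∓ U (r + s + 4 N - 2)`. The product formula
identifies this with `V (4m + 2) * U (4m + r + s)`, resp. `-U (4m + 4) * V (4m + r + s + 2)`, and
one cancels `V 2 = p ^ 2 - 2 q`, which is nonzero since `p ^ 2 ≢ 2 (mod 4)`.
-/

open Finset

def IsLucasRec {R : Type*} [CommRing R] (p q : R) (f : ℤ → R) : Prop :=
  ∀ n : ℤ, f n = p * f (n - 1) - q * f (n - 2)

theorem zpow_eq_one_of_even {G : Type*} [Group G] {g : G} (hg : g ^ 2 = 1) {n : ℤ} (hn : Even n) :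
    g ^ n = 1 := by
  obtain ⟨k, rfl⟩ := hn
  rw [← two_mul, zpow_mul, zpow_ofNat, hg, one_zpow]

theorem mul_sum_range_neg_one_pow_mul {R : Type*} [CommRing R] {a : R} {g : ℤ → R}
    (hg : ∀ w, a * g w = g (w + 2) + g (w - 2)) (t : ℤ) (N : ℕ) :
    a * ∑ i ∈ range N, (-1) ^ i * g (t + 4 * i) = g (t - 2) - (-1) ^ N * g (t + 4 * N - 2) := by
  induction N with
  | zero => simp
  | succ N ih =>
    rw [sum_range_succ, mul_add, ih, pow_succ]
    push_cast
    linear_combination (norm := ring_nf) (-1) ^ N * hg (t + 4 * N)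

namespace IsLucasRec

variable {R : Type*} [CommRing R] {p : R}

section

variable {q : R} {U V f : ℤ → R}

theorem add_two (hf : IsLucasRec p q f) (n : ℤ) : f (n + 2) = p * f (n + 1) - q * f n := by
  convert hf (n + 2) using 3 <;> ring_nf

theorem add_eq (hU : IsLucasRec p q U) (hU0 : U 0 = 0) (hU1 : U 1 = 1)
    (hf : IsLucasRec p q f) (a b : ℤ) : f (a + b) = f a * U (b + 1) - q * f (a - 1) * U b := by
  induction b using Int.induction_on generalizing a with
  | zero => simp [hU0, hU1]
  | succ k ih =>
    linear_combination (norm := ring_nf)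
      ih (a + 1) + U (k + 1) * hf.add_two (a - 1) - f a * hU.add_two k
  | pred k ih =>
    linear_combination (norm := ring_nf)
      ih (a - 1) + f (a - 1) * hU.add_two (-k - 1) - U (-k) * hf.add_two (a - 2)

theorem eq_sub_of_initial (hU : IsLucasRec p q U) (hU0 : U 0 = 0) (hU1 : U 1 = 1)
    (hf : IsLucasRec p q f) (n : ℤ) : f n = f 1 * U n - q * f 0 * U (n - 1) := by
  simpa using hU.add_eq hU0 hU1 hf 1 (n - 1)

theorem lucas_eq_sub (hU : IsLucasRec p q U) (hU0 : U 0 = 0) (hU1 : U 1 = 1)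
    (hV : IsLucasRec p q V) (hV0 : V 0 = 2) (hV1 : V 1 = p) (n : ℤ) :
    V n = U (n + 1) - q * U (n - 1) := by
  linear_combination (norm := ring_nf)
    hU.eq_sub_of_initial hU0 hU1 hV n - hU.add_two (n - 1) + U n * hV1 - q * U (n - 1) * hV0

theorem four_eq_mul_two (hU : IsLucasRec p q U) (hU0 : U 0 = 0) (hU1 : U 1 = 1)
    (hV : IsLucasRec p q V) (hV0 : V 0 = 2) (hV1 : V 1 = p) : U 4 = p * V 2 := by
  linear_combination (norm := ring_nf)
    hU.add_two 2 + p * hU.add_two 1 + (p * p - q) * hU.add_two 0 - p * hV.add_two 0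
    + (p ^ 3 - 2 * p * q) * hU1 + (q ^ 2 - p ^ 2 * q) * hU0 - p ^ 2 * hV1
    + p * q * hV0

end

section Units

variable {q : Rˣ} {U V : ℤ → R}

theorem neg_eq (hU : IsLucasRec p q U) (hU0 : U 0 = 0) (hU1 : U 1 = 1) (n : ℤ) :
    U (-n) = -(↑(q ^ (-n)) * U n) := by
  have hpred (k : ℤ) : ((q ^ k : Rˣ) : R) = ↑(q ^ (k - 1)) * q := by
    rw [← Units.val_mul, ← zpow_add_one, sub_add_cancel]
  -- `W` satisfies the same recurrence and initial values as `U`, hence equals `U`.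
  set W : ℤ → R := fun n => -(↑(q ^ n) * U (-n))
  have hW : IsLucasRec p q W := by
    intro n
    simp only [W]
    linear_combination (norm := ring_nf)
      -↑(q ^ (n - 1)) * hU.add_two (-n) - U (-n) * hpred n + U (2 - n) * hpred (n - 1)
  have hW1 : W 1 = 1 := by
    simp only [W, zpow_one]
    linear_combination (norm := ring_nf) -(hU 1) + hU1 - p * hU0
  have hWU := hU.eq_sub_of_initial hU0 hU1 hW n
  have hinv : ((q ^ (-n) : Rˣ) : R) * ↑(q ^ n) = 1 := by
    rw [← Units.val_mul, ← zpow_add, neg_add_cancel, zpow_zero, Units.val_one]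
  simp only [W, hW1, hU0, neg_zero, mul_zero, one_mul] at hWU
  linear_combination -↑(q ^ (-n)) * hWU - U (-n) * hinv

theorem mul_lucas_eq_add (hU : IsLucasRec p q U) (hU0 : U 0 = 0) (hU1 : U 1 = 1)
    (hV : IsLucasRec p q V) (hV0 : V 0 = 2) (hV1 : V 1 = p) (a b : ℤ) :
    U a * V b = U (a + b) + ↑(q ^ b) * U (a - b) := by
  have e1 : ((q ^ b : Rˣ) : R) * ↑(q ^ (-b)) = 1 := by
    rw [← Units.val_mul, ← zpow_add, add_neg_cancel, zpow_zero, Units.val_one]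
  have e2 : ((q ^ b : Rˣ) : R) * q * ↑(q ^ (-(b + 1))) = 1 := by
    rw [← Units.val_mul, ← zpow_add_one, ← Units.val_mul, ← zpow_add, add_neg_cancel,
      zpow_zero, Units.val_one]
  linear_combination (norm := ring_nf) U a * hU.lucas_eq_sub hU0 hU1 hV hV0 hV1 b
    - hU.add_eq hU0 hU1 hU b a - ↑(q ^ b) * hU.add_eq hU0 hU1 hU (-b) a
    - ↑(q ^ b) * U (a + 1) * hU.neg_eq hU0 hU1 b
    + ↑(q ^ b) * q * U a * hU.neg_eq hU0 hU1 (b + 1)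
    + U b * U (a + 1) * e1 - U (b + 1) * U a * e2

theorem mul_lucas_eq_sub (hU : IsLucasRec p q U) (hU0 : U 0 = 0) (hU1 : U 1 = 1)
    (hV : IsLucasRec p q V) (hV0 : V 0 = 2) (hV1 : V 1 = p) (a b : ℤ) :
    U a * V b = U (a + b) - ↑(q ^ a) * U (b - a) := by
  have e : ((q ^ b : Rˣ) : R) * ↑(q ^ (-(b - a))) = ↑(q ^ a) := by
    rw [← Units.val_mul, ← zpow_add]; congr 2; ring
  linear_combination (norm := ring_nf) hU.mul_lucas_eq_add hU0 hU1 hV hV0 hV1 a b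
    + ↑(q ^ b) * hU.neg_eq hU0 hU1 (b - a) - U (b - a) * e

theorem mul_lucas_of_even_right (hU : IsLucasRec p q U) (hU0 : U 0 = 0) (hU1 : U 1 = 1)
    (hV : IsLucasRec p q V) (hV0 : V 0 = 2) (hV1 : V 1 = p) (hq : q ^ 2 = 1) (a : ℤ) {b : ℤ}
    (hb : Even b) : U a * V b = U (a + b) + U (a - b) := by
  rw [hU.mul_lucas_eq_add hU0 hU1 hV hV0 hV1, zpow_eq_one_of_even hq hb, Units.val_one, one_mul]

theorem mul_lucas_of_even_left (hU : IsLucasRec p q U) (hU0 : U 0 = 0) (hU1 : U 1 = 1)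
    (hV : IsLucasRec p q V) (hV0 : V 0 = 2) (hV1 : V 1 = p) (hq : q ^ 2 = 1) {a : ℤ}
    (ha : Even a) (b : ℤ) : U a * V b = U (a + b) - U (b - a) := by
  rw [hU.mul_lucas_eq_sub hU0 hU1 hV hV0 hV1, zpow_eq_one_of_even hq ha, Units.val_one, one_mul]

theorem lucas_two_mul (hU : IsLucasRec p q U) (hU0 : U 0 = 0) (hU1 : U 1 = 1)
    (hV : IsLucasRec p q V) (hV0 : V 0 = 2) (hV1 : V 1 = p) (hq : q ^ 2 = 1) (w : ℤ) :
    V 2 * U w = U (w + 2) + U (w - 2) := by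
  rw [mul_comm, hU.mul_lucas_of_even_right hU0 hU1 hV hV0 hV1 hq w even_two]

theorem lucas_two_mul_sum_odd (hU : IsLucasRec p q U) (hU0 : U 0 = 0) (hU1 : U 1 = 1)
    (hV : IsLucasRec p q V) (hV0 : V 0 = 2) (hV1 : V 1 = p) (hq : q ^ 2 = 1) (t : ℤ) (m : ℕ) :
    V 2 * ∑ i ∈ range (2 * m + 1), (-1) ^ i * U (t + 4 * i) =
      V (4 * m + 2) * U (t + 4 * m) := by
  rw [mul_sum_range_neg_one_pow_mul (hU.lucas_two_mul hU0 hU1 hV hV0 hV1 hq),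
    Odd.neg_one_pow (odd_two_mul_add_one m), mul_comm (V _),
    hU.mul_lucas_of_even_right hU0 hU1 hV hV0 hV1 hq _ ⟨2 * m + 1, by ring⟩]
  push_cast
  ring_nf

theorem lucas_two_mul_sum_even (hU : IsLucasRec p q U) (hU0 : U 0 = 0) (hU1 : U 1 = 1)
    (hV : IsLucasRec p q V) (hV0 : V 0 = 2) (hV1 : V 1 = p) (hq : q ^ 2 = 1) (t : ℤ) (m : ℕ) :
    V 2 * ∑ i ∈ range (2 * m + 2), (-1) ^ i * U (t + 4 * i) =
      -(U (4 * m + 4) * V (t + 4 * m + 2)) := by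
  rw [mul_sum_range_neg_one_pow_mul (hU.lucas_two_mul hU0 hU1 hV hV0 hV1 hq),
    Even.neg_one_pow ⟨m + 1, by ring⟩,
    hU.mul_lucas_of_even_left hU0 hU1 hV hV0 hV1 hq ⟨2 * m + 2, by ring⟩]
  push_cast
  ring_nf

theorem sum_neg_one_pow_mul_mul_lucas (hU : IsLucasRec p q U) (hU0 : U 0 = 0) (hU1 : U 1 = 1)
    (hV : IsLucasRec p q V) (hV0 : V 0 = 2) (hV1 : V 1 = p) (hq : q ^ 2 = 1) (r s : ℤ) (N : ℕ) :
    ∑ i ∈ range N, (-1) ^ i * (U (r + 2 * i) * V (s + 2 * i)) =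
      ∑ i ∈ range N, (-1) ^ i * U (r + s + 4 * i) -
        (∑ i ∈ range N, (-1) ^ i) * (↑(q ^ r) * U (s - r)) := by
  rw [sum_mul, ← sum_sub_distrib]
  refine sum_congr rfl fun i _ => ?_
  rw [hU.mul_lucas_eq_sub hU0 hU1 hV hV0 hV1, zpow_add, zpow_eq_one_of_even hq (even_two_mul _),
    mul_one]
  ring_nf

end Units

end IsLucasRec

theorem Int.units_zpow_eq_pow_natAbs (u : ℤˣ) (n : ℤ) :
    ((u ^ n : ℤˣ) : ℤ) = (u : ℤ) ^ n.natAbs := by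
  rcases Int.natAbs_eq n with h | h <;> rw [h]
  · rw [zpow_natCast, Units.val_pow_eq_pow_val, Int.natAbs_natCast]
  · rw [zpow_neg, Int.units_inv_eq_self, zpow_natCast, Units.val_pow_eq_pow_val, Int.natAbs_neg,
      Int.natAbs_natCast]

theorem Int.mul_self_sub_units_mul_two_ne_zero (p : ℤ) (u : ℤˣ) : p * p - u * 2 ≠ 0 := by
  have := Int.sq_ne_two_mod_four p
  rcases Int.units_eq_one_or u with rfl | rfl <;> push_cast <;> omega

theorem stmt_11_general (p q : ℤ) (hq : q = 1 ∨ q = -1)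
    (U V : ℤ → ℤ)
    (hU0 : U 0 = 0) (hU1 : U 1 = 1)
    (hUrec : ∀ n : ℤ, U n = p * U (n - 1) - q * U (n - 2))
    (hV0 : V 0 = 2) (hV1 : V 1 = p)
    (hVrec : ∀ n : ℤ, V n = p * V (n - 1) - q * V (n - 2))
    (c d : ℤ → ℤ) (hc : ∀ n : ℤ, U 4 * c n = U (4 * n + 4)) (hd : ∀ n : ℤ, V 2 * d n = V (4 * n + 2))
    (r s : ℤ) (m : ℕ) :
    (∑ i ∈ Finset.range (2 * m + 1), (-1 : ℤ) ^ i * (U (r + 2 * i) * V (s + 2 * i))) =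
        d m * U (4 * m + r + s) - q ^ r.natAbs * U (s - r) ∧
      (∑ i ∈ Finset.range (2 * m + 2), (-1 : ℤ) ^ i * (U (r + 2 * i) * V (s + 2 * i))) =
        -(p * c m * V (4 * m + r + s + 2)) := by
  obtain ⟨u, rfl⟩ : IsUnit q := by rcases hq with rfl | rfl <;> simp
  have hU : IsLucasRec p (u : ℤ) U := hUrec
  have hV : IsLucasRec p (u : ℤ) V := hVrec
  have hu : u ^ 2 = 1 := Int.units_sq u
  have hV2 : V 2 ≠ 0 := by
    have h := hV.add_two 0
    rw [zero_add, zero_add, hV0, hV1] at h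
    exact h ▸ Int.mul_self_sub_units_mul_two_ne_zero p u
  have hsum := hU.sum_neg_one_pow_mul_mul_lucas hU0 hU1 hV hV0 hV1 hu r s
  simp only [Int.units_zpow_eq_pow_natAbs] at hsum
  refine ⟨mul_left_cancel₀ hV2 ?_, mul_left_cancel₀ hV2 ?_⟩
  · rw [hsum, neg_one_geom_sum, if_neg (Nat.not_even_two_mul_add_one m)]
    linear_combination (norm := ring_nf)
      hU.lucas_two_mul_sum_odd hU0 hU1 hV hV0 hV1 hu (r + s) m - U (4 * m + r + s) * hd m
  · rw [hsum, neg_one_geom_sum, if_pos ⟨m + 1, by ring⟩]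
    linear_combination (norm := ring_nf)
      hU.lucas_two_mul_sum_even hU0 hU1 hV hV0 hV1 hu (r + s) m + V (4 * m + r + s + 2) * hc m
      - V (4 * m + r + s + 2) * c m * hU.four_eq_mul_two hU0 hU1 hV hV0 hV1

theorem stmt_11 (p q : ℤ) (hp : p ≠ 0) (hq : q = 1 ∨ q = -1)
    (hΔ : p ^ 2 - 4 * q ≠ 0)
    (U V : ℤ → ℤ)
    (hU0 : U 0 = 0) (hU1 : U 1 = 1)
    (hUrec : ∀ n : ℤ, U n = p * U (n - 1) - q * U (n - 2))
    (hV0 : V 0 = 2) (hV1 : V 1 = p)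
    (hVrec : ∀ n : ℤ, V n = p * V (n - 1) - q * V (n - 2))
    (c d : ℤ → ℤ) (hc : ∀ n : ℤ, U 4 * c n = U (4 * n + 4)) (hd : ∀ n : ℤ, V 2 * d n = V (4 * n + 2))
    (r s : ℤ) (m : ℕ) :
    (∑ i ∈ Finset.range (2 * m + 1), (-1 : ℤ) ^ i * (U (r + 2 * i) * V (s + 2 * i))) =
        d m * U (4 * m + r + s) - q ^ r.natAbs * U (s - r) ∧
      (∑ i ∈ Finset.range (2 * m + 2), (-1 : ℤ) ^ i * (U (r + 2 * i) * V (s + 2 * i))) =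
        -(p * c m * V (4 * m + r + s + 2)) :=
  stmt_11_general p q hq U V hU0 hU1 hUrec hV0 hV1 hVrec c d hc hd r s m
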